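/- For every c > 0, the loss ρ₂ is bounded above: ρ₂(u) < e^{−√c}(2(1 + √c) + c) for all u ∈ ℝ, and ρ₂(u) → e^{−√c}(2(1 + √c) + c) as u → ∞. -/
import Mathlib


open Filter

/-- The Croux–Haesbroeck loss `ρ₂` with tuning constant `c`. -/
noncomputable def rhoTwo (c u : ℝ) : ℝ :=
  if u ≤ c then u * Real.exp (-Real.sqrt c)
  else -2 * Real.exp (-Real.sqrt u) * (1 + Real.sqrt u) +
    Real.exp (-Real.sqrt c) * (2 * (1 + Real.sqrt c) + c)

lemma sqrt_atTop' : Tendsto Real.sqrt atTop atTop := by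
  rw [tendsto_atTop_atTop]
  intro b
  refine ⟨(max 0 b) ^ 2, fun a ha => ?_⟩
  calc b ≤ max 0 b := le_max_right _ _
    _ = Real.sqrt ((max 0 b) ^ 2) := (Real.sqrt_sq (le_max_left _ _)).symm
    _ ≤ Real.sqrt a := Real.sqrt_le_sqrt ha

lemma aux_tendsto : Tendsto (fun x : ℝ => (1 + x) * Real.exp (-x)) atTop (nhds 0) := by
  have h1 : Tendsto (fun x : ℝ => Real.exp (-x)) atTop (nhds 0) :=
    Real.tendsto_exp_neg_atTop_nhds_zero
  have h2 : Tendsto (fun x : ℝ => x * Real.exp (-x)) atTop (nhds 0) := by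
    simpa using Real.tendsto_pow_mul_exp_neg_atTop_nhds_zero 1
  have := h1.add h2
  simp only [add_zero] at this
  convert this using 2 with x
  ring

/-- For every `c > 0`, the loss `ρ₂` is bounded above:
`ρ₂(u) < e^{−√c}(2(1 + √c) + c)` for all `u ∈ ℝ`, and
`ρ₂(u) → e^{−√c}(2(1 + √c) + c)` as `u → ∞`. -/
theorem rhoTwo_bounded_above (c : ℝ) (hc : 0 < c) :
    (∀ u : ℝ, rhoTwo c u < Real.exp (-Real.sqrt c) * (2 * (1 + Real.sqrt c) + c)) ∧
      Tendsto (rhoTwo c) atTop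
        (nhds (Real.exp (-Real.sqrt c) * (2 * (1 + Real.sqrt c) + c))) := by
  have hsc : 0 ≤ Real.sqrt c := Real.sqrt_nonneg c
  constructor
  · intro u
    unfold rhoTwo
    split_ifs with h
    · have hlt : u < 2 * (1 + Real.sqrt c) + c := by nlinarith
      have := Real.exp_pos (-Real.sqrt c)
      nlinarith
    · have h1 : 0 < Real.exp (-Real.sqrt u) := Real.exp_pos _
      have h2 : 0 ≤ Real.sqrt u := Real.sqrt_nonneg u
      nlinarith
  · have key : Tendsto (fun u : ℝ => -2 * Real.exp (-Real.sqrt u) * (1 + Real.sqrt u) +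
        Real.exp (-Real.sqrt c) * (2 * (1 + Real.sqrt c) + c)) atTop
        (nhds (Real.exp (-Real.sqrt c) * (2 * (1 + Real.sqrt c) + c))) := by
      have h := (aux_tendsto.comp sqrt_atTop').const_mul (-2)
      simp only [mul_zero] at h
      have h' := h.add_const (Real.exp (-Real.sqrt c) * (2 * (1 + Real.sqrt c) + c))
      simp only [zero_add] at h'
      convert h' using 2 with u
      simp [Function.comp]
      ring
    refine key.congr' ?_
    filter_upwards [eventually_gt_atTop c] with u hu
    simp [rhoTwo, not_le.mpr hu]
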